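/- The perpetual defaultable American put price function P satisfies: (i) P is continuous on (0,∞), and smooth fit holds at b*: lim_{s↓b*} P(s) = K − b* and lim_{s↓b*} P′(s) = −1; (ii) on (b*, ∞), P solves the ODE (σ²s²/2)·P″(s) + (r+λ)·s·P′(s) − (r+λ)·P(s) + λK = 0; (iii) on (0, b*), the value K − s satisfies (r+λ)·s·(−1) − (r+λ)·(K−s) + λK = −rK ≤ 0; and (iv) P(s) ≥ (K − s)⁺ for all s > 0, with equality exactly for s ≤ b*. -/

import Mathlib

open Real Filter

/-- `θ = 2(r+λ)/σ²`. -/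
noncomputable def perpTheta (r lam sigma : ℝ) : ℝ := 2 * (r + lam) / sigma ^ 2

/-- Optimal exercise threshold `b* = 2rK/(2(r+λ) + σ²)`. -/
noncomputable def perpBstar (r lam sigma K : ℝ) : ℝ := 2 * r * K / (2 * (r + lam) + sigma ^ 2)

/-- Market price of a perpetual American put (strike `K`) on a defaultable stock
with constant default intensity `λ`:
`P(s) = K − s` for `0 < s ≤ b*`, and
`P(s) = (rK/((r+λ)(θ+1)))·(s/b*)^{−θ} + λK/(r+λ)` for `s > b*`. -/
noncomputable def perpPut (r lam sigma K s : ℝ) : ℝ :=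
  if s ≤ perpBstar r lam sigma K then K - s
  else (r * K / ((r + lam) * (perpTheta r lam sigma + 1)))
        * (s / perpBstar r lam sigma K) ^ (-(perpTheta r lam sigma)) + lam * K / (r + lam)

/-! On `(b*, ∞)` the price is `A (s/b*)^(-θ) + λK/(r+λ)` with `A = perpPutCoeff`, and `-θ` is the
negative root of the indicial equation `σ²p(p-1)/2 + (r+λ)p - (r+λ) = 0` of this Euler equation,
so the ODE holds there.
The choice of `b*` gives `Aθ = b*` and `A + λK/(r+λ) = K - b*`: value and slope match those of
`K - s` at `b*`. Beyond `b*` the slope `-(s/b*)^(-θ-1)` exceeds `-1`, so the price stays strictly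
above `K - s`. -/

open Set Topology

section PerpPut

variable {r lam sigma K : ℝ}

lemma perpTheta_pos (hrl : 0 < r + lam) (hsigma : sigma ≠ 0) : 0 < perpTheta r lam sigma := by
  unfold perpTheta; positivity

lemma perpBstar_pos (hr : 0 < r) (hlam : 0 ≤ lam) (hK : 0 < K) : 0 < perpBstar r lam sigma K := by
  unfold perpBstar; positivity

lemma perpBstar_le (hr : 0 < r) (hlam : 0 ≤ lam) (hK : 0 < K) : perpBstar r lam sigma K ≤ K := by
  rw [perpBstar, div_le_iff₀ (by positivity)]
  nlinarith [sq_nonneg sigma]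

noncomputable def perpPutCoeff (r lam sigma K : ℝ) : ℝ :=
  r * K / ((r + lam) * (perpTheta r lam sigma + 1))

noncomputable def perpPutTail (r lam sigma K s : ℝ) : ℝ :=
  perpPutCoeff r lam sigma K * (s / perpBstar r lam sigma K) ^ (-perpTheta r lam sigma)
    + lam * K / (r + lam)

lemma perpPut_of_le {s : ℝ} (hs : s ≤ perpBstar r lam sigma K) : perpPut r lam sigma K s = K - s :=
  if_pos hs

lemma perpPut_of_lt {s : ℝ} (hs : perpBstar r lam sigma K < s) :
    perpPut r lam sigma K s = perpPutTail r lam sigma K s :=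
  if_neg hs.not_ge

lemma perpPut_eventuallyEq_tail {s : ℝ} (hs : perpBstar r lam sigma K < s) :
    perpPut r lam sigma K =ᶠ[𝓝 s] perpPutTail r lam sigma K :=
  eventually_of_mem (isOpen_Ioi.mem_nhds hs) fun _ hx => perpPut_of_lt hx

lemma perpPutCoeff_mul_perpTheta (hrl : 0 < r + lam) (hsigma : sigma ≠ 0) :
    perpPutCoeff r lam sigma K * perpTheta r lam sigma = perpBstar r lam sigma K := by
  have hθ := perpTheta_pos hrl hsigma
  unfold perpPutCoeff perpTheta perpBstar at *
  field_simp

lemma perpPutTail_perpBstar (hr : 0 < r) (hlam : 0 ≤ lam) (hsigma : sigma ≠ 0) (hK : 0 < K) :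
    perpPutTail r lam sigma K (perpBstar r lam sigma K) = K - perpBstar r lam sigma K := by
  have hrl : 0 < r + lam := by linarith
  rw [perpPutTail, div_self (perpBstar_pos hr hlam hK).ne', one_rpow, mul_one]
  have hθ := perpTheta_pos hrl hsigma
  unfold perpPutCoeff perpTheta perpBstar at *
  field_simp
  ring

lemma hasDerivAt_perpPutTail (hr : 0 < r) (hlam : 0 ≤ lam) (hsigma : sigma ≠ 0) (hK : 0 < K)
    {s : ℝ} (hs : 0 < s) :
    HasDerivAt (perpPutTail r lam sigma K)
      (-(s / perpBstar r lam sigma K) ^ (-perpTheta r lam sigma - 1)) s := by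
  set b := perpBstar r lam sigma K
  set θ := perpTheta r lam sigma
  have hb : 0 < b := perpBstar_pos hr hlam hK
  have hAθ : perpPutCoeff r lam sigma K * θ = b := perpPutCoeff_mul_perpTheta (by linarith) hsigma
  have h := ((((hasDerivAt_id s).div_const b).rpow_const (p := -θ)
    (Or.inl (div_pos hs hb).ne')).const_mul (perpPutCoeff r lam sigma K)).add_const
    (lam * K / (r + lam))
  refine h.congr_deriv ?_
  have hslope : perpPutCoeff r lam sigma K * (1 / b) * θ = 1 := by
    rw [mul_right_comm, hAθ, mul_one_div_cancel hb.ne']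
  rw [id]
  linear_combination -(s / b) ^ (-θ - 1) * hslope

lemma deriv_perpPut_of_lt (hr : 0 < r) (hlam : 0 ≤ lam) (hsigma : sigma ≠ 0) (hK : 0 < K)
    {s : ℝ} (hs : perpBstar r lam sigma K < s) :
    deriv (perpPut r lam sigma K) s
      = -(s / perpBstar r lam sigma K) ^ (-perpTheta r lam sigma - 1) := by
  rw [(perpPut_eventuallyEq_tail hs).deriv_eq,
    (hasDerivAt_perpPutTail hr hlam hsigma hK ((perpBstar_pos hr hlam hK).trans hs)).deriv]

lemma deriv_deriv_perpPut_of_lt (hr : 0 < r) (hlam : 0 ≤ lam) (hsigma : sigma ≠ 0) (hK : 0 < K)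
    {s : ℝ} (hs : perpBstar r lam sigma K < s) :
    deriv (deriv (perpPut r lam sigma K)) s
      = (perpTheta r lam sigma + 1) / perpBstar r lam sigma K
          * (s / perpBstar r lam sigma K) ^ (-perpTheta r lam sigma - 1 - 1) := by
  set b := perpBstar r lam sigma K
  set θ := perpTheta r lam sigma
  have hb : 0 < b := perpBstar_pos hr hlam hK
  have hderiv : deriv (perpPut r lam sigma K) =ᶠ[𝓝 s] fun x => -(x / b) ^ (-θ - 1) :=
    eventually_of_mem (isOpen_Ioi.mem_nhds hs) fun _ hx => deriv_perpPut_of_lt hr hlam hsigma hK hx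
  have hslope : HasDerivAt (fun x => -(x / b) ^ (-θ - 1))
      (-(1 / b * (-θ - 1) * (s / b) ^ (-θ - 1 - 1))) s :=
    (((hasDerivAt_id s).div_const b).rpow_const (Or.inl (div_pos (hb.trans hs) hb).ne')).neg
  rw [hderiv.deriv_eq, hslope.deriv]
  ring

lemma perpPut_ode (hr : 0 < r) (hlam : 0 ≤ lam) (hsigma : sigma ≠ 0) (hK : 0 < K)
    {s : ℝ} (hs : perpBstar r lam sigma K < s) :
    sigma ^ 2 * s ^ 2 / 2 * deriv (deriv (perpPut r lam sigma K)) s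
      + (r + lam) * s * deriv (perpPut r lam sigma K) s
      - (r + lam) * perpPut r lam sigma K s + lam * K = 0 := by
  set b := perpBstar r lam sigma K
  set θ := perpTheta r lam sigma
  set A := perpPutCoeff r lam sigma K
  have hrl : 0 < r + lam := by linarith
  have hb : 0 < b := perpBstar_pos hr hlam hK
  have hs0 : 0 < s := hb.trans hs
  have hx : 0 < s / b := div_pos hs0 hb
  have hAθ : A * θ = b := perpPutCoeff_mul_perpTheta hrl hsigma
  have hσθ : sigma ^ 2 * θ = 2 * (r + lam) := by
    simp only [θ, perpTheta]; field_simp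
  have hC : (r + lam) * (lam * K / (r + lam)) = lam * K := by field_simp
  have hpow1 : s * (s / b) ^ (-θ - 1) = b * (s / b) ^ (-θ) := by
    rw [rpow_sub_one hx.ne']; field_simp
  have hpow2 : s ^ 2 * (s / b) ^ (-θ - 1 - 1) / b = b * (s / b) ^ (-θ) := by
    rw [rpow_sub_one hx.ne', rpow_sub_one hx.ne']; field_simp
  set u := (s / b) ^ (-θ)
  rw [deriv_deriv_perpPut_of_lt hr hlam hsigma hK hs, deriv_perpPut_of_lt hr hlam hsigma hK hs,
    perpPut_of_lt hs, perpPutTail]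
  linear_combination sigma ^ 2 / 2 * (θ + 1) * hpow2 - (r + lam) * hpow1
    - (sigma ^ 2 / 2 * (θ + 1) - (r + lam)) * u * hAθ + A * u * (θ + 1) / 2 * hσθ - hC

lemma continuous_perpPut (hr : 0 < r) (hlam : 0 ≤ lam) (hsigma : sigma ≠ 0) (hK : 0 < K) :
    Continuous (perpPut r lam sigma K) := by
  have hb := perpBstar_pos (sigma := sigma) hr hlam hK
  refine continuous_if_le continuous_id continuous_const
    (continuous_const.sub continuous_id).continuousOn (fun s hs => ?_) fun s hs => ?_
  · exact (hasDerivAt_perpPutTail hr hlam hsigma hK (hb.trans_le hs)).continuousAt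
      |>.continuousWithinAt
  · rw [hs]
    exact (perpPutTail_perpBstar hr hlam hsigma hK).symm

lemma tendsto_perpPut_nhdsGT_perpBstar (hr : 0 < r) (hlam : 0 ≤ lam) (hsigma : sigma ≠ 0)
    (hK : 0 < K) :
    Tendsto (perpPut r lam sigma K) (𝓝[>] perpBstar r lam sigma K)
      (𝓝 (K - perpBstar r lam sigma K)) := by
  rw [← perpPut_of_le le_rfl]
  exact ((continuous_perpPut hr hlam hsigma hK).tendsto _).mono_left nhdsWithin_le_nhds

lemma tendsto_deriv_perpPut_nhdsGT_perpBstar (hr : 0 < r) (hlam : 0 ≤ lam) (hsigma : sigma ≠ 0)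
    (hK : 0 < K) :
    Tendsto (deriv (perpPut r lam sigma K)) (𝓝[>] perpBstar r lam sigma K) (𝓝 (-1)) := by
  set b := perpBstar r lam sigma K
  have hb : 0 < b := perpBstar_pos hr hlam hK
  have hslope : ContinuousAt (fun x => -(x / b) ^ (-perpTheta r lam sigma - 1)) b :=
    ((continuousAt_id.div_const b).rpow_const (Or.inl (div_self hb.ne' ▸ one_ne_zero))).neg
  have hlim := hslope.continuousWithinAt (s := Ioi b)
  rw [ContinuousWithinAt, div_self hb.ne', one_rpow] at hlim
  exact hlim.congr' (eventually_nhdsWithin_of_forall fun _ hx =>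
    (deriv_perpPut_of_lt hr hlam hsigma hK hx).symm)

lemma sub_lt_perpPutTail (hr : 0 < r) (hlam : 0 ≤ lam) (hsigma : sigma ≠ 0) (hK : 0 < K)
    {s : ℝ} (hs : perpBstar r lam sigma K < s) : K - s < perpPutTail r lam sigma K s := by
  set b := perpBstar r lam sigma K
  have hb : 0 < b := perpBstar_pos hr hlam hK
  have hθ : 0 < perpTheta r lam sigma := perpTheta_pos (by linarith) hsigma
  have hderiv (x : ℝ) (hx : b ≤ x) :
      HasDerivAt (fun y => perpPutTail r lam sigma K y + y)
        (-(x / b) ^ (-perpTheta r lam sigma - 1) + 1) x :=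
    (hasDerivAt_perpPutTail hr hlam hsigma hK (hb.trans_le hx)).add (hasDerivAt_id x)
  have hmono : StrictMonoOn (fun y => perpPutTail r lam sigma K y + y) (Ici b) := by
    refine strictMonoOn_of_deriv_pos (convex_Ici b)
      (fun x hx => (hderiv x hx).continuousAt.continuousWithinAt) fun x hx => ?_
    rw [interior_Ici] at hx
    rw [(hderiv x hx.le).deriv]
    have := rpow_lt_one_of_one_lt_of_neg ((one_lt_div hb).mpr hx)
      (by linarith : -perpTheta r lam sigma - 1 < 0)
    linarith
  have hlt : perpPutTail r lam sigma K b + b < perpPutTail r lam sigma K s + s :=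
    hmono self_mem_Ici hs.le hs
  rw [perpPutTail_perpBstar hr hlam hsigma hK] at hlt
  linarith

lemma perpPutTail_pos (hr : 0 < r) (hlam : 0 ≤ lam) (hsigma : sigma ≠ 0) (hK : 0 < K) {s : ℝ}
    (hs : 0 < s) : 0 < perpPutTail r lam sigma K s := by
  have hb : 0 < perpBstar r lam sigma K := perpBstar_pos hr hlam hK
  have hθ : 0 < perpTheta r lam sigma := perpTheta_pos (by linarith) hsigma
  have hA : 0 < perpPutCoeff r lam sigma K := by unfold perpPutCoeff; positivity
  have hC : 0 ≤ lam * K / (r + lam) := by positivity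
  exact add_pos_of_pos_of_nonneg (mul_pos hA (rpow_pos_of_pos (div_pos hs hb) _)) hC

lemma perpPut_eq_max_of_le (hr : 0 < r) (hlam : 0 ≤ lam) (hK : 0 < K) {s : ℝ}
    (hs : s ≤ perpBstar r lam sigma K) : perpPut r lam sigma K s = max (K - s) 0 := by
  rw [perpPut_of_le hs, max_eq_left (sub_nonneg.mpr (hs.trans (perpBstar_le hr hlam hK)))]

lemma max_sub_lt_perpPut (hr : 0 < r) (hlam : 0 ≤ lam) (hsigma : sigma ≠ 0) (hK : 0 < K) {s : ℝ}
    (hs : perpBstar r lam sigma K < s) : max (K - s) 0 < perpPut r lam sigma K s := by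
  rw [perpPut_of_lt hs]
  exact max_lt (sub_lt_perpPutTail hr hlam hsigma hK hs)
    (perpPutTail_pos hr hlam hsigma hK ((perpBstar_pos hr hlam hK).trans hs))

end PerpPut

/-- **Properties of the perpetual defaultable American put price (eq. (3.20)).**
(i) `P` is continuous on `(0,∞)` and smooth fit holds at `b*`:
`lim_{s↓b*} P(s) = K − b*` and `lim_{s↓b*} P′(s) = −1`;
(ii) on `(b*,∞)`, `P` solves `(σ²s²/2)P″ + (r+λ)sP′ − (r+λ)P + λK = 0`;
(iii) on `(0,b*)`, the value `K − s` satisfies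
`(r+λ)s(−1) − (r+λ)(K−s) + λK = −rK ≤ 0`;
(iv) `P(s) ≥ (K − s)⁺` for all `s > 0`, with equality exactly for `s ≤ b*`. -/
theorem perpPut_properties
    (r lam sigma K : ℝ) (hr : 0 < r) (hlam : 0 ≤ lam) (hsigma : 0 < sigma) (hK : 0 < K) :
    (ContinuousOn (fun s => perpPut r lam sigma K s) (Set.Ioi 0)
      ∧ Tendsto (fun s => perpPut r lam sigma K s)
          (nhdsWithin (perpBstar r lam sigma K) (Set.Ioi (perpBstar r lam sigma K)))
          (nhds (K - perpBstar r lam sigma K))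
      ∧ Tendsto (deriv (fun s => perpPut r lam sigma K s))
          (nhdsWithin (perpBstar r lam sigma K) (Set.Ioi (perpBstar r lam sigma K)))
          (nhds (-1)))
    ∧ (∀ s ∈ Set.Ioi (perpBstar r lam sigma K),
        sigma ^ 2 * s ^ 2 / 2 * deriv (deriv (fun x => perpPut r lam sigma K x)) s
          + (r + lam) * s * deriv (fun x => perpPut r lam sigma K x) s
          - (r + lam) * perpPut r lam sigma K s + lam * K = 0)
    ∧ (∀ s ∈ Set.Ioo 0 (perpBstar r lam sigma K),
        (r + lam) * s * (-1) - (r + lam) * (K - s) + lam * K = -(r * K) ∧ -(r * K) ≤ 0)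
    ∧ (∀ s ∈ Set.Ioi (0 : ℝ),
        max (K - s) 0 ≤ perpPut r lam sigma K s
          ∧ (perpPut r lam sigma K s = max (K - s) 0 ↔ s ≤ perpBstar r lam sigma K)) := by
  have hsigma' : sigma ≠ 0 := hsigma.ne'
  refine ⟨⟨(continuous_perpPut hr hlam hsigma' hK).continuousOn,
      tendsto_perpPut_nhdsGT_perpBstar hr hlam hsigma' hK,
      tendsto_deriv_perpPut_nhdsGT_perpBstar hr hlam hsigma' hK⟩,
    fun s hs => perpPut_ode hr hlam hsigma' hK hs,
    fun s _ => ⟨by ring, neg_nonpos.mpr (by positivity)⟩, fun s _ => ?_⟩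
  rcases le_or_gt s (perpBstar r lam sigma K) with hs | hs
  · rw [perpPut_eq_max_of_le hr hlam hK hs]
    exact ⟨le_rfl, iff_of_true rfl hs⟩
  · have hlt := max_sub_lt_perpPut hr hlam hsigma' hK hs
    exact ⟨hlt.le, iff_of_false hlt.ne' hs.not_ge⟩
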